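/- (Lattice point pairs on equal spheres.) For every integer r ≥ 2 and every ε > 0 there exists a constant C = C(r, ε) such that for every integer N ≥ 1, the number of pairs (k, k') ∈ ℤ^r × ℤ^r with |k_i| ≤ N and |k'_i| ≤ N for all i, and with k_1² + … + k_r² = (k'_1)² + … + (k'_r)², is at most C · N^{2r − 2 + ε}. -/

import Mathlib

/-!
Write `k = (a, u)` and `k' = (b, v)` with `a, b ∈ [-N, N]`. The condition `|k|² = |k'|²` reads
`a² - b² = m` with `m = |v|² - |u|²`, and `|m| ≤ (r - 1) N²`. If `m ≠ 0`, then
`(a - b)(a + b) = m`, so `(a, b)` is fixed by the divisor `|a - b|` of `m` and a sign: at most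
`2 τ(|m|) ≪_ε N^ε` choices for each of the `(2N + 1)^(2r - 2)` tails `(u, v)`. If `m = 0`, the
tails form the same problem in dimension `r - 1`, which has `O(N^(2r - 3))` solutions because the
last coordinate is determined up to sign by the others, and `b = ±a` leaves `O(N)` choices.

The divisor bound `τ(n) ≪_ε n^ε` comes from `τ(n) = ∏ (a_p + 1)`: for `p ≥ 2^(1/ε)` one has
`a + 1 ≤ 2^a ≤ p^(a ε)`, and the finitely many smaller primes each cost a bounded factor.
-/

open Finset Real

lemma natCast_add_one_le_rpow_of_two_rpow_inv_le {ε p : ℝ} (hε : 0 < ε) (hp : 2 ^ ε⁻¹ ≤ p)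
    (a : ℕ) : (a + 1 : ℝ) ≤ (p ^ a) ^ ε := by
  have hp0 : 0 ≤ p := (rpow_nonneg zero_le_two _).trans hp
  have two_le : 2 ≤ p ^ ε := by
    simpa [← rpow_mul zero_le_two, hε.ne'] using rpow_le_rpow (by positivity) hp hε.le
  calc (a + 1 : ℝ) ≤ 2 ^ a := by exact_mod_cast Nat.lt_two_pow_self
    _ ≤ (p ^ ε) ^ a := pow_le_pow_left₀ zero_le_two two_le a
    _ = (p ^ a) ^ ε := by rw [← rpow_natCast_mul hp0, ← rpow_mul_natCast hp0, mul_comm]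

lemma natCast_add_one_le_mul_rpow_of_two_le {ε p : ℝ} (hε : 0 < ε) (hp : 2 ≤ p) (a : ℕ) :
    (a + 1 : ℝ) ≤ (1 + (ε * log 2)⁻¹) * (p ^ a) ^ ε := by
  have hc : 0 < ε * log 2 := mul_pos hε (log_pos one_lt_two)
  have key : 1 + a * (ε * log 2) ≤ (p ^ a) ^ ε := calc
    1 + a * (ε * log 2) ≤ exp (a * ε * log 2) := by
      rw [← mul_assoc]; linarith [add_one_le_exp (a * ε * log 2)]
    _ = 2 ^ (a * ε) := by rw [rpow_def_of_pos two_pos, mul_comm (log 2)]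
    _ ≤ p ^ (a * ε) := rpow_le_rpow zero_le_two hp (by positivity)
    _ = (p ^ a) ^ ε := rpow_natCast_mul (by linarith) a ε
  have one_le : 1 ≤ (p ^ a) ^ ε := le_trans (le_add_of_nonneg_right (by positivity)) key
  calc (a + 1 : ℝ) = 1 + (ε * log 2)⁻¹ * (a * (ε * log 2)) := by field_simp; ring
    _ ≤ (p ^ a) ^ ε + (ε * log 2)⁻¹ * (p ^ a) ^ ε := by gcongr; linarith
    _ = (1 + (ε * log 2)⁻¹) * (p ^ a) ^ ε := by ring

theorem exists_card_divisors_le_mul_rpow {ε : ℝ} (hε : 0 < ε) :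
    ∃ C > 0, ∀ n : ℕ, n ≠ 0 → (#n.divisors : ℝ) ≤ C * (n : ℝ) ^ ε := by
  set K : ℝ := 1 + (ε * log 2)⁻¹
  have hK : 1 ≤ K := le_add_of_nonneg_right (inv_nonneg.2 (by positivity))
  set P : ℕ := ⌈(2 : ℝ) ^ ε⁻¹⌉₊
  refine ⟨K ^ P, by positivity, fun n hn => ?_⟩
  classical
  -- primes below `2 ^ ε⁻¹` cost a factor `K`, larger primes cost nothing
  set c : ℕ → ℝ := fun p => if (p : ℝ) < 2 ^ ε⁻¹ then K else 1
  have per_prime : ∀ p ∈ n.primeFactors,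
      ((n.factorization p + 1 : ℕ) : ℝ) ≤ c p * ((p : ℝ) ^ n.factorization p) ^ ε := by
    intro p hp
    push_cast
    by_cases hsmall : (p : ℝ) < 2 ^ ε⁻¹
    · simp only [c, if_pos hsmall]
      exact natCast_add_one_le_mul_rpow_of_two_le hε
        (by exact_mod_cast (Nat.prime_of_mem_primeFactors hp).two_le) _
    · simp only [c, if_neg hsmall, one_mul]
      exact natCast_add_one_le_rpow_of_two_rpow_inv_le hε (not_lt.1 hsmall) _
  have prod_c : ∏ p ∈ n.primeFactors, c p ≤ K ^ P := by
    rw [prod_ite, prod_const, prod_const_one, mul_one]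
    refine pow_le_pow_right₀ hK ((card_le_card fun p hp => ?_).trans_eq (card_range P))
    rw [mem_range]
    exact_mod_cast (mem_filter.1 hp).2.trans_le (Nat.le_ceil _)
  have prod_pow : ∏ p ∈ n.primeFactors, ((p : ℝ) ^ n.factorization p) ^ ε = (n : ℝ) ^ ε := by
    rw [finsetProd_rpow _ _ fun p _ => by positivity]
    exact_mod_cast congrArg (fun m : ℕ => (m : ℝ) ^ ε) (Nat.prod_factorization_pow_eq_self hn)
  calc (#n.divisors : ℝ) = ∏ p ∈ n.primeFactors, ((n.factorization p + 1 : ℕ) : ℝ) := by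
        rw [Nat.card_divisors hn]; push_cast; rfl
    _ ≤ ∏ p ∈ n.primeFactors, c p * ((p : ℝ) ^ n.factorization p) ^ ε :=
        prod_le_prod (fun _ _ => by positivity) per_prime
    _ ≤ K ^ P * (n : ℝ) ^ ε := by
        rw [prod_mul_distrib, prod_pow]; gcongr

noncomputable def latticeBox (n N : ℕ) : Finset (Fin n → ℤ) :=
  Fintype.piFinset fun _ => Icc (-(N : ℤ)) N

noncomputable def equalNormPairs (n N : ℕ) : Finset ((Fin n → ℤ) × (Fin n → ℤ)) :=
  (latticeBox n N ×ˢ latticeBox n N).filter fun p => ∑ i, p.1 i ^ 2 = ∑ i, p.2 i ^ 2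

lemma card_Icc_neg_natCast (N : ℕ) : #(Icc (-(N : ℤ)) N) = 2 * N + 1 := by
  rw [Int.card_Icc]
  omega

lemma card_latticeBox (n N : ℕ) : #(latticeBox n N) = (2 * N + 1) ^ n := by
  rw [latticeBox, Fintype.card_piFinset_const, card_Icc_neg_natCast]

lemma cons_mem_latticeBox {n N : ℕ} {a : ℤ} {u : Fin n → ℤ} :
    Fin.cons a u ∈ latticeBox (n + 1) N ↔ a ∈ Icc (-(N : ℤ)) N ∧ u ∈ latticeBox n N := by
  simp only [latticeBox, Fin.mem_piFinset_iff_zero_tail, Fin.cons_zero, Fin.tail_cons]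
  rfl

lemma Int.eq_of_sq_eq_sq_of_pos_iff {a b : ℤ} (h : a ^ 2 = b ^ 2) (hpos : 0 < a ↔ 0 < b) :
    a = b := by
  rcases sq_eq_sq_iff_eq_or_eq_neg.1 h with h | h <;> omega

lemma card_product_univ_bool {α : Type*} (s : Finset α) :
    #(s ×ˢ (univ : Finset Bool)) = 2 * #s := by
  rw [card_product, card_univ, Fintype.card_bool, mul_comm]

lemma card_filter_sq_sub_sq_eq_le_two_mul_card (m : ℤ) (I J : Finset ℤ) :
    #((I ×ˢ J).filter fun q => q.1 ^ 2 - q.2 ^ 2 = m) ≤ 2 * #I := by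
  rw [← card_product_univ_bool]
  refine card_le_card_of_injOn (fun q => (q.1, decide (0 < q.2)))
    (fun q hq => mem_product.2 ⟨(mem_product.1 (mem_filter.1 hq).1).1, mem_univ _⟩)
    fun q hq q' hq' h => ?_
  simp only [coe_filter, mem_product, Set.mem_ofPred_eq, Prod.mk.injEq, decide_eq_decide]
    at hq hq' h
  refine Prod.ext h.1 (Int.eq_of_sq_eq_sq_of_pos_iff ?_ h.2)
  linear_combination hq'.2 - hq.2 + (q.1 + q'.1) * h.1

lemma card_filter_sq_sub_sq_eq_le_two_mul_card_divisors {m : ℤ} (hm : m ≠ 0)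
    (s : Finset (ℤ × ℤ)) :
    #(s.filter fun q => q.1 ^ 2 - q.2 ^ 2 = m) ≤ 2 * #m.natAbs.divisors := by
  rw [← card_product_univ_bool]
  refine card_le_card_of_injOn (fun q => ((q.1 - q.2).natAbs, decide (0 < q.1 - q.2)))
    (fun q hq => ?_) fun q hq q' hq' h => ?_
  · simp only [coe_filter, Set.mem_ofPred_eq] at hq
    simp only [coe_product, Set.mem_prod, mem_coe, Nat.mem_divisors, mem_univ, and_true]
    exact ⟨Int.natAbs_dvd_natAbs.2 ⟨q.1 + q.2, by rw [← hq.2]; ring⟩, Int.natAbs_ne_zero.2 hm⟩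
  · simp only [coe_filter, Set.mem_ofPred_eq, Prod.mk.injEq, decide_eq_decide] at hq hq' h
    have hdiff : q.1 - q.2 = q'.1 - q'.2 := by omega
    have hsum : q.1 + q.2 = q'.1 + q'.2 := by
      refine mul_left_cancel₀ (a := q.1 - q.2) (fun h0 => hm ?_) ?_
      · rw [← hq.2]; linear_combination (q.1 + q.2) * h0
      · linear_combination hq.2 - hq'.2 - (q'.1 + q'.2) * hdiff
    exact Prod.ext (by omega) (by omega)

lemma cons_mem_equalNormPairs {n N : ℕ} {a b : ℤ} {u v : Fin n → ℤ} :
    (Fin.cons a u, Fin.cons b v) ∈ equalNormPairs (n + 1) N ↔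
      ((a, b) ∈ Icc (-(N : ℤ)) N ×ˢ Icc (-(N : ℤ)) N ∧
        a ^ 2 - b ^ 2 = ∑ i, v i ^ 2 - ∑ i, u i ^ 2) ∧
        (u, v) ∈ latticeBox n N ×ˢ latticeBox n N := by
  simp only [equalNormPairs, mem_filter, mem_product, cons_mem_latticeBox, Fin.sum_univ_succ,
    Fin.cons_zero, Fin.cons_succ]
  constructor
  · rintro ⟨⟨⟨ha, hu⟩, hb, hv⟩, h⟩
    exact ⟨⟨⟨ha, hb⟩, by linear_combination h⟩, hu, hv⟩
  · rintro ⟨⟨⟨ha, hb⟩, h⟩, hu, hv⟩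
    exact ⟨⟨⟨ha, hu⟩, hb, hv⟩, by linear_combination h⟩

lemma card_equalNormPairs_succ (n N : ℕ) :
    #(equalNormPairs (n + 1) N) = ∑ t ∈ latticeBox n N ×ˢ latticeBox n N,
      #((Icc (-(N : ℤ)) N ×ˢ Icc (-(N : ℤ)) N).filter
        fun q => q.1 ^ 2 - q.2 ^ 2 = ∑ i, t.2 i ^ 2 - ∑ i, t.1 i ^ 2) := by
  classical
  refine card_eq_sum_card_fiberwise (f := fun p => (Fin.tail p.1, Fin.tail p.2)) (fun p hp => ?_)
    |>.trans (sum_congr rfl fun t ht => card_nbij' (fun p => (p.1 0, p.2 0))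
      (fun q => (Fin.cons q.1 t.1, Fin.cons q.2 t.2)) (fun p hp => ?_) (fun q hq => ?_)
      (fun p hp => ?_) (fun q _ => by simp))
  · obtain ⟨p₁, p₂⟩ := p
    cases p₁ using Fin.consCases
    cases p₂ using Fin.consCases
    simp only [mem_coe, cons_mem_equalNormPairs, Fin.tail_cons] at hp ⊢
    exact hp.2
  · obtain ⟨p₁, p₂⟩ := p
    cases p₁ using Fin.consCases
    cases p₂ using Fin.consCases
    simp only [coe_filter, Set.mem_ofPred_eq, cons_mem_equalNormPairs, Fin.tail_cons] at hp
    obtain ⟨⟨hp, -⟩, rfl⟩ := hp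
    simpa using hp
  · simp only [coe_filter, Set.mem_ofPred_eq, Fin.tail_cons, cons_mem_equalNormPairs] at hq ⊢
    exact ⟨⟨hq, ht⟩, trivial⟩
  · simp only [coe_filter, Set.mem_ofPred_eq] at hp
    simp [← hp.2]

lemma card_equalNormPairs_succ_le (n N : ℕ) :
    #(equalNormPairs (n + 1) N) ≤ 2 * (2 * N + 1) ^ (2 * n + 1) := calc
  #(equalNormPairs (n + 1) N) ≤ ∑ _t ∈ latticeBox n N ×ˢ latticeBox n N, 2 * (2 * N + 1) := by
    rw [card_equalNormPairs_succ, ← card_Icc_neg_natCast]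
    exact sum_le_sum fun t _ => card_filter_sq_sub_sq_eq_le_two_mul_card _ _ _
  _ = 2 * (2 * N + 1) ^ (2 * n + 1) := by
    rw [sum_const, card_product, card_latticeBox, smul_eq_mul]
    ring

lemma sum_sq_le_of_mem_latticeBox {n N : ℕ} {u : Fin n → ℤ} (hu : u ∈ latticeBox n N) :
    ∑ i, u i ^ 2 ≤ n * N ^ 2 := by
  calc ∑ i, u i ^ 2 ≤ ∑ _i : Fin n, (N : ℤ) ^ 2 := sum_le_sum fun i _ => by
        have := mem_Icc.1 (Fintype.mem_piFinset.1 hu i)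
        exact sq_le_sq' this.1 this.2
    _ = n * N ^ 2 := by simp

lemma natAbs_sum_sq_sub_sum_sq_le {n N : ℕ} {u v : Fin n → ℤ} (hu : u ∈ latticeBox n N)
    (hv : v ∈ latticeBox n N) : (∑ i, v i ^ 2 - ∑ i, u i ^ 2).natAbs ≤ n * N ^ 2 := by
  have hu' := sum_sq_le_of_mem_latticeBox hu
  have hv' := sum_sq_le_of_mem_latticeBox hv
  have hu₀ : 0 ≤ ∑ i, u i ^ 2 := sum_nonneg fun i _ => sq_nonneg _
  have hv₀ : 0 ≤ ∑ i, v i ^ 2 := sum_nonneg fun i _ => sq_nonneg _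
  zify
  rw [abs_le]
  constructor <;> linarith

lemma card_equalNormPairs_le (n N : ℕ) {D : ℝ} (hD₀ : 0 ≤ D)
    (hD : ∀ m : ℤ, m ≠ 0 → m.natAbs ≤ (n + 1) * N ^ 2 → (2 * #m.natAbs.divisors : ℝ) ≤ D) :
    (#(equalNormPairs (n + 2) N) : ℝ) ≤ (2 * N + 1) ^ (2 * n + 2) * (4 + D) := by
  classical
  set I := Icc (-(N : ℤ)) N
  set B := latticeBox (n + 1) N ×ˢ latticeBox (n + 1) N
  set m : (Fin (n + 1) → ℤ) × (Fin (n + 1) → ℤ) → ℤ := fun t => ∑ i, t.2 i ^ 2 - ∑ i, t.1 i ^ 2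
  set f : (Fin (n + 1) → ℤ) × (Fin (n + 1) → ℤ) → ℝ :=
    fun t => #((I ×ˢ I).filter fun q => q.1 ^ 2 - q.2 ^ 2 = m t)
  have degenerate : B.filter (fun t => m t = 0) = equalNormPairs (n + 1) N :=
    filter_congr fun t _ => by rw [sub_eq_zero, eq_comm]
  have zero_part : ∑ t ∈ B.filter (fun t => m t = 0), f t ≤ 4 * (2 * N + 1) ^ (2 * n + 2) := calc
    ∑ t ∈ B.filter (fun t => m t = 0), f t
        ≤ ∑ t ∈ B.filter (fun t => m t = 0), (2 * (2 * N + 1) : ℝ) :=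
      sum_le_sum fun t _ => by
        dsimp only [f]
        exact_mod_cast (card_filter_sq_sub_sq_eq_le_two_mul_card _ I I).trans_eq
          (by rw [card_Icc_neg_natCast])
    _ ≤ 2 * (2 * N + 1) ^ (2 * n + 1) * (2 * (2 * N + 1)) := by
      rw [sum_const, nsmul_eq_mul, degenerate]
      gcongr
      exact_mod_cast card_equalNormPairs_succ_le n N
    _ = 4 * (2 * N + 1) ^ (2 * n + 2) := by ring
  have nonzero_part :
      ∑ t ∈ B.filter (fun t => m t ≠ 0), f t ≤ (2 * N + 1) ^ (2 * n + 2) * D := calc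
    ∑ t ∈ B.filter (fun t => m t ≠ 0), f t ≤ ∑ t ∈ B.filter (fun t => m t ≠ 0), D := by
      refine sum_le_sum fun t ht => ?_
      obtain ⟨ht, hmt⟩ := mem_filter.1 ht
      obtain ⟨hu, hv⟩ := mem_product.1 ht
      refine le_trans ?_ (hD _ hmt (natAbs_sum_sq_sub_sum_sq_le hu hv))
      dsimp only [f]
      exact_mod_cast card_filter_sq_sub_sq_eq_le_two_mul_card_divisors hmt _
    _ ≤ #B * D := by
      rw [sum_const, nsmul_eq_mul]
      gcongr
      exact filter_subset _ _
    _ = (2 * N + 1) ^ (2 * n + 2) * D := by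
      rw [card_product, card_latticeBox]; push_cast; ring
  calc (#(equalNormPairs (n + 2) N) : ℝ)
      = ∑ t ∈ B.filter (fun t => m t = 0), f t + ∑ t ∈ B.filter (fun t => m t ≠ 0), f t := by
        rw [sum_filter_add_sum_filter_not, card_equalNormPairs_succ]; push_cast; rfl
    _ ≤ (2 * N + 1) ^ (2 * n + 2) * (4 + D) := by linarith

lemma coe_equalNormPairs (r N : ℕ) :
    (equalNormPairs r N : Set ((Fin r → ℤ) × (Fin r → ℤ))) =
      {p | (∀ i, |p.1 i| ≤ (N : ℤ) ∧ |p.2 i| ≤ (N : ℤ)) ∧ ∑ i, p.1 i ^ 2 = ∑ i, p.2 i ^ 2} := by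
  ext p
  simp [equalNormPairs, latticeBox, abs_le, forall_and, and_assoc]

lemma two_mul_add_one_pow_mul_le {N : ℕ} (hN : 1 ≤ N) (k : ℕ) {A ε : ℝ} (hA : 0 ≤ A)
    (hε : 0 ≤ ε) :
    (2 * N + 1 : ℝ) ^ k * (4 + A * (N : ℝ) ^ ε) ≤ 3 ^ k * (4 + A) * (N : ℝ) ^ (k + ε) := by
  have hN : (1 : ℝ) ≤ N := by exact_mod_cast hN
  have one_le : (1 : ℝ) ≤ (N : ℝ) ^ ε := one_le_rpow hN hε
  calc (2 * N + 1 : ℝ) ^ k * (4 + A * (N : ℝ) ^ ε) ≤ (3 * N) ^ k * ((4 + A) * (N : ℝ) ^ ε) := by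
        gcongr
        · linarith
        · nlinarith
    _ = 3 ^ k * (4 + A) * (N : ℝ) ^ (k + ε) := by
        rw [rpow_add (by positivity), rpow_natCast]
        ring

/-- Lattice point pairs on equal spheres: the number of pairs `(k, k')` of lattice points
in the box `[-N, N]^r` with `|k|² = |k'|²` is at most `C(r, ε) N^{2r - 2 + ε}`. -/
theorem lattice_pairs_equal_spheres (r : ℕ) (hr : 2 ≤ r) (ε : ℝ) (hε : 0 < ε) :
    ∃ C : ℝ, 0 < C ∧
      ∀ (N : ℕ), 1 ≤ N →
      (Set.ncard {p : (Fin r → ℤ) × (Fin r → ℤ) |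
          (∀ i, |p.1 i| ≤ (N : ℤ) ∧ |p.2 i| ≤ (N : ℤ)) ∧
          (∑ i, (p.1 i) ^ 2 = ∑ i, (p.2 i) ^ 2)} : ℝ)
        ≤ C * (N : ℝ) ^ (2 * (r : ℝ) - 2 + ε) := by
  obtain ⟨n, rfl⟩ : ∃ n, r = n + 2 := ⟨r - 2, by omega⟩
  obtain ⟨K, hK, hτ⟩ := exists_card_divisors_le_mul_rpow (half_pos hε)
  set A := 2 * K * ((n + 1 : ℕ) : ℝ) ^ (ε / 2)
  refine ⟨3 ^ (2 * n + 2) * (4 + A), by positivity, fun N hN => ?_⟩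
  have hD (m : ℤ) (hm : m ≠ 0) (hle : m.natAbs ≤ (n + 1) * N ^ 2) :
      (2 * #m.natAbs.divisors : ℝ) ≤ A * (N : ℝ) ^ ε := calc
    (2 * #m.natAbs.divisors : ℝ) ≤ 2 * (K * (m.natAbs : ℝ) ^ (ε / 2)) := by
      gcongr; exact hτ _ (Int.natAbs_ne_zero.2 hm)
    _ ≤ 2 * (K * (((n + 1 : ℕ) : ℝ) * (N : ℝ) ^ 2) ^ (ε / 2)) := by
      gcongr; exact_mod_cast hle
    _ = A * (N : ℝ) ^ ε := by
      rw [mul_rpow (by positivity) (by positivity), ← rpow_natCast_mul (by positivity),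
        Nat.cast_two, mul_div_cancel₀ ε two_ne_zero]
      ring
  rw [← coe_equalNormPairs, Set.ncard_coe_finset]
  calc (#(equalNormPairs (n + 2) N) : ℝ) ≤ (2 * N + 1) ^ (2 * n + 2) * (4 + A * (N : ℝ) ^ ε) :=
        card_equalNormPairs_le n N (by positivity) hD
    _ ≤ 3 ^ (2 * n + 2) * (4 + A) * (N : ℝ) ^ ((2 * n + 2 : ℕ) + ε) :=
        two_mul_add_one_pow_mul_le hN _ (by positivity) hε.le
    _ = 3 ^ (2 * n + 2) * (4 + A) * (N : ℝ) ^ (2 * ((n + 2 : ℕ) : ℝ) - 2 + ε) := by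
        push_cast; ring_nf
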